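/- Let $h : \mathbb{R}^n \to \mathbb{R}$ be differentiable with $L_3$-Lipschitz gradient, and let $Y : [0, s] \to \mathbb{R}^n$ be a curve with $Y(0) = x$, and suppose there exist $L_1, L_2 > 0$ with $\|Y(t) - Y(0)\| \le L_1 t \|Y'(0)\|$ and $\|Y(t) - Y(0) - t Y'(0)\| \le L_2 t^2 \|Y'(0)\|^2$ for all $t \in [0,s]$. If moreover $\langle \nabla h(Y(0)), Y'(0)\rangle = -\|Y'(0)\|^2$, then for all $t \in [0,s]$: $h(Y(t)) \le h(Y(0)) - \big(t - L_2 t^2 \|\nabla h(Y(0))\| - \frac{L_3 L_1^2}{2} t^2\big) \|Y'(0)\|^2$. -/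

import Mathlib

/-!
Use the descent lemma `h y ≤ h x + ⟪∇h x, y - x⟫ + L₃/2 ‖y - x‖²`, proved by showing that
`t ↦ h (x + t v) - t ⟪∇h x, v⟫ - L₃ t²‖v‖²/2` is antitone on `[0, ∞)`. With `x = Y 0`, `y = Y t`,
split `Y t - Y 0 = t Y'(0) + r`: the angle condition turns the first part into `-t ‖Y'(0)‖²`,
Cauchy–Schwarz bounds `⟪∇h x, r⟫` by `L₂ t² ‖∇h x‖ ‖Y'(0)‖²`, and the quadratic term is bounded
through `‖Y t - Y 0‖ ≤ L₁ t ‖Y'(0)‖`.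
-/

open InnerProductSpace Set

theorem nonneg_of_forall_norm_sub_le_mul {E F : Type*} [NormedAddCommGroup E] [Nontrivial E]
    [SeminormedAddCommGroup F] {g : E → F} {L : ℝ} (hlip : ∀ x y, ‖g x - g y‖ ≤ L * ‖x - y‖) :
    0 ≤ L := by
  obtain ⟨a, b, hab⟩ := exists_pair_ne E
  exact nonneg_of_mul_nonneg_left ((norm_nonneg _).trans (hlip a b))
    (norm_pos_iff.2 (sub_ne_zero.2 hab))

section Descent

variable {E : Type*} [NormedAddCommGroup E] [InnerProductSpace ℝ E] [CompleteSpace E]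
  {h : E → ℝ} {g : E → E}

theorem hasDerivAt_comp_add_smul (hgrad : ∀ z, HasGradientAt h (g z) z) (x v : E) (t : ℝ) :
    HasDerivAt (fun u : ℝ => h (x + u • v)) ⟪g (x + t • v), v⟫_ℝ t :=
  (hgrad _).hasFDerivAt.comp_hasDerivAt t
    (by simpa using ((hasDerivAt_id t).smul_const v).const_add x)

theorem descent_lemma (hgrad : ∀ z, HasGradientAt h (g z) z) {L : ℝ} {x : E}
    (hlip : ∀ y, ‖g y - g x‖ ≤ L * ‖y - x‖) (y : E) :
    h y ≤ h x + ⟪g x, y - x⟫_ℝ + L / 2 * ‖y - x‖ ^ 2 := by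
  set v := y - x
  set φ : ℝ → ℝ := fun t => h (x + t • v) - t * ⟪g x, v⟫_ℝ - L / 2 * t ^ 2 * ‖v‖ ^ 2
  have hφ : ∀ t, HasDerivAt φ (⟪g (x + t • v) - g x, v⟫_ℝ - L * t * ‖v‖ ^ 2) t := by
    intro t
    refine (((hasDerivAt_comp_add_smul hgrad x v t).sub
      ((hasDerivAt_id t).mul_const ⟪g x, v⟫_ℝ)).sub
      ((((hasDerivAt_id t).pow 2).const_mul (L / 2)).mul_const (‖v‖ ^ 2))).congr_deriv ?_
    simp only [inner_sub_left, id, Nat.cast_ofNat]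
    ring
  have hφ_nonpos : ∀ t ∈ interior (Ici (0 : ℝ)),
      ⟪g (x + t • v) - g x, v⟫_ℝ - L * t * ‖v‖ ^ 2 ≤ 0 := by
    intro t ht
    rw [interior_Ici] at ht
    have hstep : ‖x + t • v - x‖ = t * ‖v‖ := by
      rw [add_sub_cancel_left, norm_smul, Real.norm_of_nonneg (le_of_lt ht)]
    rw [sub_nonpos]
    calc ⟪g (x + t • v) - g x, v⟫_ℝ ≤ ‖g (x + t • v) - g x‖ * ‖v‖ := real_inner_le_norm _ _
      _ ≤ L * ‖x + t • v - x‖ * ‖v‖ := by gcongr; exact hlip _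
      _ = L * t * ‖v‖ ^ 2 := by rw [hstep]; ring
  have hanti : AntitoneOn φ (Ici 0) :=
    antitoneOn_of_hasDerivWithinAt_nonpos (convex_Ici 0)
      (fun t _ => (hφ t).continuousAt.continuousWithinAt)
      (fun t _ => (hφ t).hasDerivWithinAt) hφ_nonpos
  have h01 := hanti self_mem_Ici (mem_Ici.2 zero_le_one) zero_le_one
  simp only [φ, v, one_smul, add_sub_cancel, zero_smul, add_zero] at h01
  linarith

theorem sufficient_decrease_of_retraction_bounds (hgrad : ∀ z, HasGradientAt h (g z) z)
    {L1 L2 L3 t : ℝ} {x y v : E} (hL3 : 0 ≤ L3) (hlip : ∀ y, ‖g y - g x‖ ≤ L3 * ‖y - x‖)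
    (h1 : ‖y - x‖ ≤ L1 * t * ‖v‖) (h2 : ‖y - x - t • v‖ ≤ L2 * t ^ 2 * ‖v‖ ^ 2)
    (hangle : ⟪g x, v⟫_ℝ = -‖v‖ ^ 2) :
    h y ≤ h x - (t - L2 * t ^ 2 * ‖g x‖ - L3 * L1 ^ 2 / 2 * t ^ 2) * ‖v‖ ^ 2 := by
  have hlinear : ⟪g x, y - x⟫_ℝ ≤ ‖g x‖ * (L2 * t ^ 2 * ‖v‖ ^ 2) - t * ‖v‖ ^ 2 := by
    have hsplit : ⟪g x, y - x⟫_ℝ = ⟪g x, y - x - t • v⟫_ℝ + t * ⟪g x, v⟫_ℝ := by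
      rw [inner_sub_right (y := y - x), real_inner_smul_right]; ring
    have hrem : ⟪g x, y - x - t • v⟫_ℝ ≤ ‖g x‖ * (L2 * t ^ 2 * ‖v‖ ^ 2) :=
      (real_inner_le_norm _ _).trans (by gcongr)
    rw [hsplit, hangle]
    linarith
  have hquad : L3 / 2 * ‖y - x‖ ^ 2 ≤ L3 * L1 ^ 2 / 2 * t ^ 2 * ‖v‖ ^ 2 := by
    have : ‖y - x‖ ^ 2 ≤ (L1 * t * ‖v‖) ^ 2 := pow_le_pow_left₀ (norm_nonneg _) h1 2
    nlinarith
  linarith [descent_lemma hgrad hlip y]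

end Descent

theorem stmt_19_general (n : ℕ) (h : EuclideanSpace ℝ (Fin n) → ℝ)
    (g : EuclideanSpace ℝ (Fin n) → EuclideanSpace ℝ (Fin n))
    (hgrad : ∀ x, HasGradientAt h (g x) x)
    (L3 : ℝ) (hlip : ∀ x y, ‖g x - g y‖ ≤ L3 * ‖x - y‖)
    (s : ℝ)
    (Y : ℝ → EuclideanSpace ℝ (Fin n)) (Y'0 : EuclideanSpace ℝ (Fin n))
    (L1 L2 : ℝ)
    (h1 : ∀ t ∈ Set.Icc (0 : ℝ) s, ‖Y t - Y 0‖ ≤ L1 * t * ‖Y'0‖)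
    (h2 : ∀ t ∈ Set.Icc (0 : ℝ) s, ‖Y t - Y 0 - t • Y'0‖ ≤ L2 * t ^ 2 * ‖Y'0‖ ^ 2)
    (hangle : (inner ℝ (g (Y 0)) Y'0 : ℝ) = -‖Y'0‖ ^ 2) :
    ∀ t ∈ Set.Icc (0 : ℝ) s,
      h (Y t) ≤ h (Y 0)
        - (t - L2 * t ^ 2 * ‖g (Y 0)‖ - L3 * L1 ^ 2 / 2 * t ^ 2) * ‖Y'0‖ ^ 2 := by
  intro t ht
  rcases subsingleton_or_nontrivial (EuclideanSpace ℝ (Fin n)) with _ | _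
  -- On the zero space `hlip` does not force `0 ≤ L3`, but both sides are trivially equal.
  · simp [Subsingleton.elim (Y t) (Y 0), Subsingleton.elim Y'0 0]
  · exact sufficient_decrease_of_retraction_bounds hgrad (nonneg_of_forall_norm_sub_le_mul hlip)
      (fun y => hlip y (Y 0)) (h1 t ht) (h2 t ht) hangle

theorem stmt_19 (n : ℕ) (h : EuclideanSpace ℝ (Fin n) → ℝ)
    (g : EuclideanSpace ℝ (Fin n) → EuclideanSpace ℝ (Fin n))
    (hgrad : ∀ x, HasGradientAt h (g x) x)
    (L3 : ℝ) (hlip : ∀ x y, ‖g x - g y‖ ≤ L3 * ‖x - y‖)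
    (s : ℝ) (hs : 0 ≤ s)
    (Y : ℝ → EuclideanSpace ℝ (Fin n)) (Y'0 : EuclideanSpace ℝ (Fin n))
    (L1 L2 : ℝ) (hL1 : 0 < L1) (hL2 : 0 < L2)
    (h1 : ∀ t ∈ Set.Icc (0 : ℝ) s, ‖Y t - Y 0‖ ≤ L1 * t * ‖Y'0‖)
    (h2 : ∀ t ∈ Set.Icc (0 : ℝ) s, ‖Y t - Y 0 - t • Y'0‖ ≤ L2 * t ^ 2 * ‖Y'0‖ ^ 2)
    (hangle : (inner ℝ (g (Y 0)) Y'0 : ℝ) = -‖Y'0‖ ^ 2) :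
    ∀ t ∈ Set.Icc (0 : ℝ) s,
      h (Y t) ≤ h (Y 0)
        - (t - L2 * t ^ 2 * ‖g (Y 0)‖ - L3 * L1 ^ 2 / 2 * t ^ 2) * ‖Y'0‖ ^ 2 :=
  stmt_19_general n h g hgrad L3 hlip s Y Y'0 L1 L2 h1 h2 hangle
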